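/- Let α : R → A be an O-operator on the algebra (R,∘,ℓ,r) of weight λ whose kernel is a two-sided ideal of (R,∘). Then for u,u',v,v' ∈ R with α(u)=α(u') and α(v)=α(v'), one has α(u r(α(v))) = α(u' r(α(v'))), α(ℓ(α(u))v) = α(ℓ(α(u'))v'), and α(u∘v) = α(u'∘v'). -/

import Mathlib

/-!
Everything reduces to kernels: by linearity it suffices that `r (α v) w`, `l (α u) z`, `w ∘ v`
and `u ∘ z` lie in `ker α` whenever `w` and `z` do. For the products this is the ideal property;
for the actions, the O-operator identity applied to `(w, v)` (resp. `(u, z)`) has left side `0`,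
and all its other terms but the action term vanish, so that term vanishes too.
-/

open LinearMap

section

variable {k A R : Type*} [CommRing k] [AddCommGroup A] [Module k A] [AddCommGroup R] [Module k R]

def IsOOperator (mulA : A →ₗ[k] A →ₗ[k] A) (mulR : R →ₗ[k] R →ₗ[k] R)
    (l r : A →ₗ[k] Module.End k R) (lam : k) (α : R →ₗ[k] A) : Prop :=
  ∀ u v : R, mulA (α u) (α v) = α (l (α u) v) + α (r (α v) u) + lam • α (mulR u v)

theorem map_bilin_eq_of_map_eq {B : R →ₗ[k] R →ₗ[k] R} {α : R →ₗ[k] A}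
    (hker : ∀ u v : R, α u = 0 → α (B u v) = 0 ∧ α (B v u) = 0)
    {u u' v v' : R} (hu : α u = α u') (hv : α v = α v') : α (B u v) = α (B u' v') := by
  have hdiff : B u v - B u' v' = B (u - u') v + B u' (v - v') := by
    simp only [map_sub, LinearMap.sub_apply]
    abel
  rw [← sub_mem_ker_iff, hdiff, mem_ker, map_add,
    (hker _ v (sub_mem_ker_iff.2 hu)).1, (hker _ u' (sub_mem_ker_iff.2 hv)).2, add_zero]

namespace IsOOperator

variable {mulA : A →ₗ[k] A →ₗ[k] A} {mulR : R →ₗ[k] R →ₗ[k] R} {l r : A →ₗ[k] Module.End k R}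
  {lam : k} {α : R →ₗ[k] A}

theorem map_r_eq_zero (hα : IsOOperator mulA mulR l r lam α) {w v : R} (hw : α w = 0)
    (hwv : α (mulR w v) = 0) : α (r (α v) w) = 0 := by
  simpa [hw, hwv] using (hα w v).symm

theorem map_l_eq_zero (hα : IsOOperator mulA mulR l r lam α) {u z : R} (hz : α z = 0)
    (huz : α (mulR u z) = 0) : α (l (α u) z) = 0 := by
  simpa [hz, huz] using (hα u z).symm

theorem map_r_eq (hα : IsOOperator mulA mulR l r lam α)
    (hker : ∀ u v : R, α u = 0 → α (mulR u v) = 0 ∧ α (mulR v u) = 0)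
    {u u' v v' : R} (hu : α u = α u') (hv : α v = α v') :
    α (r (α v) u) = α (r (α v') u') := by
  have hw : α (u - u') = 0 := sub_mem_ker_iff.2 hu
  rw [← hv, ← sub_mem_ker_iff, mem_ker, ← map_sub]
  exact hα.map_r_eq_zero hw (hker _ v hw).1

theorem map_l_eq (hα : IsOOperator mulA mulR l r lam α)
    (hker : ∀ u v : R, α u = 0 → α (mulR u v) = 0 ∧ α (mulR v u) = 0)
    {u u' v v' : R} (hu : α u = α u') (hv : α v = α v') :
    α (l (α u) v) = α (l (α u') v') := by
  have hz : α (v - v') = 0 := sub_mem_ker_iff.2 hv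
  rw [← hu, ← sub_mem_ker_iff, mem_ker, ← map_sub]
  exact hα.map_l_eq_zero hz (hker _ u hz).2

end IsOOperator

end

theorem O_operator_range_well_defined_general
    (k : Type*) [CommRing k]
    (A : Type*) [AddCommGroup A] [Module k A]
    (R : Type*) [AddCommGroup R] [Module k R]
    (mulA : A →ₗ[k] A →ₗ[k] A)
    (mulR : R →ₗ[k] R →ₗ[k] R)
    (l r : A →ₗ[k] Module.End k R)
    (lam : k) (α : R →ₗ[k] A)
    (hα : ∀ u v : R,
      mulA (α u) (α v)
        = α (l (α u) v) + α (r (α v) u) + lam • α (mulR u v))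
    -- ker α is a two-sided ideal of (R,∘)
    (hker : ∀ u v : R, α u = 0 → α (mulR u v) = 0 ∧ α (mulR v u) = 0) :
    ∀ u u' v v' : R, α u = α u' → α v = α v' →
      α (r (α v) u) = α (r (α v') u') ∧
      α (l (α u) v) = α (l (α u') v') ∧
      α (mulR u v) = α (mulR u' v') := by
  have hO : IsOOperator mulA mulR l r lam α := hα
  intro u u' v v' hu hv
  exact ⟨hO.map_r_eq hker hu hv, hO.map_l_eq hker hu hv, map_bilin_eq_of_map_eq hker hu hv⟩

/-- For an O-operator α : R → A of weight λ whose kernel is an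
ideal of (R,∘), the induced operations on α(R) are well defined. -/
theorem O_operator_range_well_defined
    (k : Type*) [CommRing k]
    (A : Type*) [AddCommGroup A] [Module k A]
    (R : Type*) [AddCommGroup R] [Module k R]
    (mulA : A →ₗ[k] A →ₗ[k] A)
    (mulA_assoc : ∀ x y z : A, mulA (mulA x y) z = mulA x (mulA y z))
    (mulR : R →ₗ[k] R →ₗ[k] R)
    (mulR_assoc : ∀ u v w : R, mulR (mulR u v) w = mulR u (mulR v w))
    (l r : A →ₗ[k] Module.End k R)
    (hl : ∀ x y : A, ∀ v : R, l (mulA x y) v = l x (l y v))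
    (hr : ∀ x y : A, ∀ v : R, r (mulA x y) v = r y (r x v))
    (hlr : ∀ x y : A, ∀ v : R, r y (l x v) = l x (r y v))
    (hc1 : ∀ x : A, ∀ v w : R, l x (mulR v w) = mulR (l x v) w)
    (hc2 : ∀ x : A, ∀ v w : R, r x (mulR v w) = mulR v (r x w))
    (hc3 : ∀ x : A, ∀ v w : R, mulR (r x v) w = mulR v (l x w))
    (lam : k) (α : R →ₗ[k] A)
    (hα : ∀ u v : R,
      mulA (α u) (α v)
        = α (l (α u) v) + α (r (α v) u) + lam • α (mulR u v))
    -- ker α is a two-sided ideal of (R,∘)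
    (hker : ∀ u v : R, α u = 0 → α (mulR u v) = 0 ∧ α (mulR v u) = 0) :
    ∀ u u' v v' : R, α u = α u' → α v = α v' →
      α (r (α v) u) = α (r (α v') u') ∧
      α (l (α u) v) = α (l (α u') v') ∧
      α (mulR u v) = α (mulR u' v') :=
  O_operator_range_well_defined_general k A R mulA mulR l r lam α hα hker
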